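/- Well-propagation theorem (abstract form): Let systems have a reduction relation → and labelled communication transitions N —⟨v₁,…,v_r⟩→_{ℓ₁,ℓ₂} N'. Assume a CFA validity predicate Valid(Σ̂,κ,Θ,N) satisfying: (a) subject reduction: Valid is preserved by →; (b) communication soundness: if Valid(Σ̂,κ,Θ,N) and N —⟨v₁,…,v_r⟩→_{ℓ₁,ℓ₂} N' then there exist abstract values v̂₁,…,v̂_r with (ℓ₁,⟨v̂₁,…,v̂_r⟩) ∈ κ(ℓ₂) and, for each i, some grammar Ĝ ∈ v̂ᵢ with the abstract tree of vᵢ in Lang Ĝ. Let (𝔗_D, 𝔗_S) be a pair of tagging functions and 𝔓 ⊆ 𝔇 × L × L a policy. If Valid(Σ̂,κ,Θ,N) and for all ℓ₁, ℓ₂, whenever (ℓ₁,⟨v̂₁,…,v̂_r⟩) ∈ κ(ℓ₂) then 𝔓(𝔗_S(v̂ᵢ), ℓ₁, ℓ₂) holds for all i, then N enjoys 𝔓: no reduct N' of N has a communication transition N' —⟨v₁,…,v_r⟩→_{ℓ₁,ℓ₂} N'' with ¬𝔓(𝔗_D(abstract tree of vᵢ), ℓ₁, ℓ₂) for some i. 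-/

import Mathlib

/-! Subject reduction makes validity an invariant of every reduct of `N`. At a valid system,
communication soundness places each transmitted tree in the language of a grammar of the
abstract value at the same position of some sequence recorded in `κ`; the tagging pair turns the
dynamic tag of that tree into the static tag of the abstract value, which the `κ`-level check
covers. -/

theorem Relation.ReflTransGen.of_invariant {α : Type*} {r : α → α → Prop} {p : α → Prop}
    (hp : ∀ a b, p a → r a b → p b) {a b : α} (hab : Relation.ReflTransGen r a b) (ha : p a) :
    p b := by
  induction hab with
  | refl => exact ha
  | tail _ hbc ih => exact hp _ _ ih hbc

theorem policy_of_comm_of_valid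
    {Sys L V T G D : Type*}
    {Comm : Sys → L → L → List V → Sys → Prop} {tree : V → T} {Lang : G → Set T}
    {κ : L → Set (L × List (Set G))} {Valid : Sys → Prop}
    (hComm : ∀ N ℓ₁ ℓ₂ (vs : List V) N', Valid N → Comm N ℓ₁ ℓ₂ vs N' →
      ∃ avs : List (Set G), (ℓ₁, avs) ∈ κ ℓ₂ ∧ avs.length = vs.length ∧
        ∀ i (hv : i < vs.length) (ha : i < avs.length),
          ∃ Gh ∈ avs.get ⟨i, ha⟩, tree (vs.get ⟨i, hv⟩) ∈ Lang Gh)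
    {TD : T → D} {TS : Set G → D}
    (hTag : ∀ av : Set G, ∀ g ∈ av, ∀ t ∈ Lang g, TD t = TS av)
    {P : D → L → L → Prop}
    (hκ : ∀ ℓ₁ ℓ₂ (avs : List (Set G)), (ℓ₁, avs) ∈ κ ℓ₂ → ∀ av ∈ avs, P (TS av) ℓ₁ ℓ₂)
    {N N' : Sys} (hN : Valid N) {ℓ₁ ℓ₂ : L} {vs : List V} (hcomm : Comm N ℓ₁ ℓ₂ vs N')
    (i : ℕ) (hv : i < vs.length) :
    P (TD (tree (vs.get ⟨i, hv⟩))) ℓ₁ ℓ₂ := by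
  obtain ⟨avs, hmem, hlen, hcover⟩ := hComm N ℓ₁ ℓ₂ vs N' hN hcomm
  have ha : i < avs.length := hlen ▸ hv
  obtain ⟨g, hg, ht⟩ := hcover i hv ha
  rw [hTag _ g hg _ ht]
  exact hκ ℓ₁ ℓ₂ avs hmem _ (avs.get_mem ⟨i, ha⟩)

/-- Abstract well-propagation theorem.
`Sys`: systems; `L`: node labels; `V`: concrete values, each carrying an abstract
tree via `tree`; `T`: abstract trees; `G`: grammars with language map `Lang`;
abstract values are sets of grammars; `D`: tags. -/
theorem well_propagation
    {Sys L V T G D : Type*}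
    (Step : Sys → Sys → Prop)
    (Comm : Sys → L → L → List V → Sys → Prop)
    (tree : V → T)
    (Lang : G → Set T)
    (κ : L → Set (L × List (Set G)))
    (Valid : Sys → Prop)
    -- (a) subject reduction
    (hSR : ∀ N N', Valid N → Step N N' → Valid N')
    -- (b) communication soundness
    (hComm : ∀ N ℓ₁ ℓ₂ (vs : List V) N', Valid N → Comm N ℓ₁ ℓ₂ vs N' →
      ∃ avs : List (Set G), (ℓ₁, avs) ∈ κ ℓ₂ ∧ avs.length = vs.length ∧
        ∀ i (hv : i < vs.length) (ha : i < avs.length),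
          ∃ Gh ∈ avs.get ⟨i, ha⟩, tree (vs.get ⟨i, hv⟩) ∈ Lang Gh)
    -- tagging pair
    (TD : T → D) (TS : Set G → D)
    (hTag : ∀ av : Set G, ∀ g ∈ av, ∀ t ∈ Lang g, TD t = TS av)
    -- policy
    (P : D → L → L → Prop)
    -- the analysis is valid for N
    (N : Sys) (hValid : Valid N)
    -- κ-level policy check
    (hκ : ∀ ℓ₁ ℓ₂ (avs : List (Set G)), (ℓ₁, avs) ∈ κ ℓ₂ →
      ∀ av ∈ avs, P (TS av) ℓ₁ ℓ₂) :
    -- N enjoys the policy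
    ∀ N', Relation.ReflTransGen Step N N' →
      ∀ ℓ₁ ℓ₂ (vs : List V) N'', Comm N' ℓ₁ ℓ₂ vs N'' →
        ∀ i (hv : i < vs.length), P (TD (tree (vs.get ⟨i, hv⟩))) ℓ₁ ℓ₂ :=
  fun _ hsteps _ _ _ _ hcomm =>
    policy_of_comm_of_valid hComm hTag hκ (hsteps.of_invariant hSR hValid) hcomm
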